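/- Let µ be a Borel probability measure on ℝ^d with finite second moment, γ a tangent element at µ, and η a Borel probability measure on C([0,1],ℝ^d) with (e₀)_#η = µ. Assume there exists a measurable f : [0,1]×ℝ^d → ℝ^d, bounded and Lipschitz in the space variable uniformly in time, such that η is concentrated on curves θ satisfying θ(t) = θ(0) + ∫₀ᵗ f(s,θ(s)) ds for all t ∈ [0,1]. Then there exists a unique parallel transport of γ along η. -/

import Mathlib

open MeasureTheory
open scoped ENNReal NNReal unitInterval

noncomputable section

abbrev Rd (d : ℕ) := EuclideanSpace ℝ (Fin d)

abbrev Curves (E : Type*) [TopologicalSpace E] := C(unitInterval, E)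

instance (E : Type*) [TopologicalSpace E] : MeasurableSpace (Curves E) := borel _
instance (E : Type*) [TopologicalSpace E] : BorelSpace (Curves E) := ⟨rfl⟩

/-- Evaluation at time `t` of a continuous curve. -/
def ev {E : Type*} [TopologicalSpace E] (t : unitInterval) (f : Curves E) : E := f t

/-- First-component curve of a curve in a product space. -/
def p₁ {E F : Type*} [TopologicalSpace E] [TopologicalSpace F] (ψ : Curves (E × F)) : Curves E :=
  ⟨fun t => (ψ t).1, continuous_fst.comp ψ.continuous⟩

/-- Finite second moment. -/
def FinSM {E : Type*} [MeasurableSpace E] [NormedAddCommGroup E] (μ : Measure E) : Prop :=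
  ∫⁻ x, (‖x‖₊ : ℝ≥0∞) ^ 2 ∂μ < ⊤

/-- A tangent element at `μ`. -/
def IsTangent {E : Type*} [MeasurableSpace E] [NormedAddCommGroup E]
    (μ : Measure E) (γ : Measure (E × E)) : Prop :=
  IsProbabilityMeasure γ ∧ γ.map Prod.fst = μ ∧ FinSM (γ.map Prod.snd)

/-- Parallel transport of a tangent element `γ` along a Lagrangian path `η`. -/
def IsParallelTransport {E : Type*} [TopologicalSpace E] [MeasurableSpace E]
    (γ : Measure (E × E)) (η : Measure (Curves E)) (Ψ : Measure (Curves (E × E))) : Prop :=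
  IsProbabilityMeasure Ψ ∧
  (∀ᵐ ψ ∂Ψ, ∀ t : unitInterval, (ψ t).2 = (ψ 0).2) ∧
  Ψ.map p₁ = η ∧
  Ψ.map (ev 0) = γ

/-- Projection of `ℝ` onto `[0,1]`. -/
def pr (s : ℝ) : unitInterval := Set.projIcc 0 1 zero_le_one s

/-!
Since `f` is Lipschitz in space, Grönwall's lemma makes a solution of the integral equation unique
given its initial point. Hence every parallel transport is concentrated on curves `t ↦ (θ t, v)`
with `θ` a solution, and on these curves evaluation at time `0` is injective. Two measures on a
Polish space concentrated on a set where a continuous map is injective coincide once their images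
do (Lusin–Souslin), so a parallel transport is determined by its time-zero marginal `γ`.
For existence, disintegrate `γ` along its first marginal `μ = (e₀)_#η`, glue the kernel to `η`
through `θ ↦ θ 0`, and keep the second component constant.
-/

open ProbabilityTheory Set

section Gronwall

theorem eqOn_zero_of_le_mul_integral {g : ℝ → ℝ} {K a b : ℝ} (hg : Continuous g)
    (hg_nonneg : ∀ t ∈ Icc a b, 0 ≤ g t) (hle : ∀ t ∈ Icc a b, g t ≤ K * ∫ s in a..t, g s) :
    ∀ t ∈ Icc a b, g t = 0 := by
  set G : ℝ → ℝ := fun t => ∫ s in a..t, g s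
  have hG : ∀ t, HasDerivAt G (g t) t := fun t =>
    intervalIntegral.integral_hasDerivAt_right (hg.intervalIntegrable a t)
      (hg.stronglyMeasurableAtFilter _ _) hg.continuousAt
  have hG_nonneg : ∀ t ∈ Icc a b, 0 ≤ G t := fun t ht =>
    intervalIntegral.integral_nonneg ht.1 fun s hs => hg_nonneg s ⟨hs.1, hs.2.trans ht.2⟩
  have hG_zero : ∀ t ∈ Icc a b, G t = 0 :=
    eq_zero_of_abs_deriv_le_mul_abs_self_of_eq_zero_right
      (fun t _ => (hG t).continuousAt.continuousWithinAt) (fun t _ => (hG t).hasDerivWithinAt)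
      intervalIntegral.integral_same fun t ht => by
        rw [Real.norm_of_nonneg (hg_nonneg t (Ico_subset_Icc_self ht)),
          Real.norm_of_nonneg (hG_nonneg t (Ico_subset_Icc_self ht))]
        exact hle t (Ico_subset_Icc_self ht)
  intro t ht
  have h := hle t ht
  rw [show (∫ s in a..t, g s) = 0 from hG_zero t ht, mul_zero] at h
  exact le_antisymm h (hg_nonneg t ht)

theorem eqOn_of_eq_add_integral_of_lipschitzWith {E : Type*} [NormedAddCommGroup E]
    [NormedSpace ℝ E] {v : ℝ → E → E} {K : ℝ≥0} {a b : ℝ}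
    (hv : ∀ t ∈ Icc a b, LipschitzWith K (v t)) {θ₁ θ₂ : ℝ → E}
    (hθ₁ : Continuous θ₁) (hθ₂ : Continuous θ₂)
    (hi₁ : IntervalIntegrable (fun s => v s (θ₁ s)) volume a b)
    (hi₂ : IntervalIntegrable (fun s => v s (θ₂ s)) volume a b)
    (h₁ : ∀ t ∈ Icc a b, θ₁ t = θ₁ a + ∫ s in a..t, v s (θ₁ s))
    (h₂ : ∀ t ∈ Icc a b, θ₂ t = θ₂ a + ∫ s in a..t, v s (θ₂ s)) (ha : θ₁ a = θ₂ a) :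
    EqOn θ₁ θ₂ (Icc a b) := by
  have hdist := eqOn_zero_of_le_mul_integral (g := fun t => ‖θ₁ t - θ₂ t‖) (K := K)
    (a := a) (b := b) (hθ₁.sub hθ₂).norm (fun _ _ => norm_nonneg _) fun t ht => ?_
  · exact fun t ht => sub_eq_zero.mp (norm_eq_zero.mp (hdist t ht))
  have hsub : uIcc a t ⊆ uIcc a b := uIcc_subset_uIcc_left (Icc_subset_uIcc ht)
  have hi₁' := hi₁.mono_set hsub
  have hi₂' := hi₂.mono_set hsub
  calc ‖θ₁ t - θ₂ t‖ = ‖∫ s in a..t, (v s (θ₁ s) - v s (θ₂ s))‖ := by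
        rw [intervalIntegral.integral_sub hi₁' hi₂', h₁ t ht, h₂ t ht, ha, add_sub_add_left_eq_sub]
    _ ≤ ∫ s in a..t, ‖v s (θ₁ s) - v s (θ₂ s)‖ :=
        intervalIntegral.norm_integral_le_integral_norm ht.1
    _ ≤ ∫ s in a..t, (K : ℝ) * ‖θ₁ s - θ₂ s‖ := by
        refine intervalIntegral.integral_mono_on ht.1 (hi₁'.sub hi₂').norm
          ((continuous_const.mul (hθ₁.sub hθ₂).norm).intervalIntegrable a t) fun s hs => ?_
        simpa only [dist_eq_norm] using
          (hv s ⟨hs.1, hs.2.trans ht.2⟩).dist_le_mul (θ₁ s) (θ₂ s)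
    _ = K * ∫ s in a..t, ‖θ₁ s - θ₂ s‖ := intervalIntegral.integral_const_mul _ _

end Gronwall

lemma continuous_pr : Continuous pr := continuous_projIcc (h := zero_le_one)

lemma pr_val (t : unitInterval) : pr t = t := projIcc_val zero_le_one t

section IntegralCurves

variable {E : Type*} [NormedAddCommGroup E] [MeasurableSpace E] [BorelSpace E]
  [SecondCountableTopology E] {f : unitInterval → E → E}

theorem intervalIntegrable_along_curve (hf : Measurable (Function.uncurry f)) {M : ℝ}
    (hM : ∀ t x, ‖f t x‖ ≤ M) (θ : Curves E) (a b : ℝ) :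
    IntervalIntegrable (fun s => f (pr s) (θ (pr s))) volume a b := by
  have hmeas : Measurable fun s => f (pr s) (θ (pr s)) :=
    hf.comp (continuous_pr.measurable.prodMk (θ.continuous.comp continuous_pr).measurable)
  exact (intervalIntegrable_const (c := M)).mono_fun hmeas.aestronglyMeasurable
    (Filter.Eventually.of_forall fun s => (hM _ _).trans (le_abs_self M))

theorem curve_eq_of_eq_add_integral [NormedSpace ℝ E] (hf : Measurable (Function.uncurry f)) {M : ℝ}
    (hM : ∀ t x, ‖f t x‖ ≤ M) {L : ℝ≥0} (hL : ∀ t, LipschitzWith L (f t)) {θ₁ θ₂ : Curves E}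
    (h₁ : ∀ t : unitInterval, θ₁ t = θ₁ 0 + ∫ s in (0:ℝ)..(t:ℝ), f (pr s) (θ₁ (pr s)))
    (h₂ : ∀ t : unitInterval, θ₂ t = θ₂ 0 + ∫ s in (0:ℝ)..(t:ℝ), f (pr s) (θ₂ (pr s)))
    (h0 : θ₁ 0 = θ₂ 0) : θ₁ = θ₂ := by
  have pr_zero : pr 0 = 0 := pr_val 0
  have extend : ∀ θ : Curves E,
      (∀ t : unitInterval, θ t = θ 0 + ∫ s in (0:ℝ)..(t:ℝ), f (pr s) (θ (pr s))) →
      ∀ t ∈ Icc (0:ℝ) 1, θ (pr t) = θ (pr 0) + ∫ s in (0:ℝ)..t, f (pr s) (θ (pr s)) := by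
    intro θ hθ t ht
    rw [hθ (pr t), pr_zero, pr, projIcc_of_mem zero_le_one ht]
  have hEq := eqOn_of_eq_add_integral_of_lipschitzWith (v := fun s => f (pr s))
    (fun t _ => hL (pr t)) (θ₁.continuous.comp continuous_pr) (θ₂.continuous.comp continuous_pr)
    (intervalIntegrable_along_curve hf hM θ₁ 0 1) (intervalIntegrable_along_curve hf hM θ₂ 0 1)
    (extend θ₁ h₁) (extend θ₂ h₂) (by simpa only [Function.comp_apply, pr_zero] using h0)
  ext t
  simpa only [Function.comp_apply, pr_val] using hEq t.2

end IntegralCurves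

namespace MeasureTheory.Measure

theorem ext_of_map_eq_of_injOn {Ω β : Type*} [TopologicalSpace Ω] [PolishSpace Ω]
    [MeasurableSpace Ω] [BorelSpace Ω] [TopologicalSpace β] [T2Space β] [MeasurableSpace β]
    [BorelSpace β] {e : Ω → β} (he : Continuous e) {A : Set Ω} (hinj : InjOn e A)
    {m₁ m₂ : Measure Ω} (h₁ : ∀ᵐ x ∂m₁, x ∈ A) (h₂ : ∀ᵐ x ∂m₂, x ∈ A)
    (h : m₁.map e = m₂.map e) : m₁ = m₂ := by
  set S := (toMeasurable (m₁ + m₂) Aᶜ)ᶜ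
  have hS : MeasurableSet S := (measurableSet_toMeasurable _ _).compl
  have hSA : S ⊆ A := compl_subset_comm.mp (subset_toMeasurable _ _)
  have hnull : (m₁ + m₂) Sᶜ = 0 := by
    rw [compl_compl, measure_toMeasurable, add_apply, show m₁ Aᶜ = 0 from h₁,
      show m₂ Aᶜ = 0 from h₂, add_zero]
  have hm : ∀ m : Measure Ω, m Sᶜ = 0 → ∀ B, MeasurableSet B → m B = m.map e (e '' (B ∩ S)) := by
    intro m hm B hB
    have himage : MeasurableSet (e '' (B ∩ S)) := (hB.inter hS).image_of_continuousOn_injOn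
      he.continuousOn (hinj.mono (inter_subset_right.trans hSA))
    rw [map_apply he.measurable himage, ← measure_inter_conull (s := e ⁻¹' _) hm,
      (hinj.mono hSA).preimage_image_inter inter_subset_right, measure_inter_conull hm]
  ext B hB
  rw [hm m₁ (le_zero_iff.mp (hnull ▸ le_add_right le_rfl)) B hB,
    hm m₂ (le_zero_iff.mp (hnull ▸ le_add_left le_rfl)) B hB, h]

theorem map_prodMap_compProd_comap {α β γ : Type*} [MeasurableSpace α]
    [MeasurableSpace β] [MeasurableSpace γ] (η : Measure α) [SFinite η] (κ : Kernel β γ)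
    [IsSFiniteKernel κ] {g : α → β} (hg : Measurable g) :
    (η ⊗ₘ κ.comap g hg).map (Prod.map g id) = η.map g ⊗ₘ κ := by
  ext B hB
  have hgid : Measurable (Prod.map g (id : γ → γ)) := hg.prodMap measurable_id
  rw [Measure.map_apply hgid hB, Measure.compProd_apply (hgid hB), Measure.compProd_apply hB,
    lintegral_map (Kernel.measurable_kernel_prodMk_left hB) hg]
  rfl

end MeasureTheory.Measure

section Curves

variable {E F : Type*} [TopologicalSpace E] [TopologicalSpace F]

lemma continuous_ev (t : unitInterval) : Continuous (ev (E := E) t) := continuous_eval_const t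

lemma continuous_p₁ : Continuous (p₁ (E := E) (F := F)) :=
  ContinuousMap.continuous_of_continuous_uncurry _ (continuous_fst.comp continuous_eval)

def curveWithConstSnd (p : Curves E × F) : Curves (E × F) :=
  p.1.prodMk (ContinuousMap.const _ p.2)

lemma continuous_curveWithConstSnd : Continuous (curveWithConstSnd (E := E) (F := F)) :=
  ContinuousMap.continuous_of_continuous_uncurry _ <|
    (continuous_eval.comp ((continuous_fst.comp continuous_fst).prodMk continuous_snd)).prodMk
      (continuous_snd.comp continuous_fst)

lemma p₁_comp_curveWithConstSnd : p₁ ∘ curveWithConstSnd (E := E) (F := F) = Prod.fst := rfl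

lemma ev_comp_curveWithConstSnd (t : unitInterval) :
    ev t ∘ curveWithConstSnd (E := E) (F := F) = Prod.map (ev t) id := rfl

lemma isClosed_setOf_snd_const [T2Space F] :
    IsClosed {ψ : Curves (E × F) | ∀ t : unitInterval, (ψ t).2 = (ψ 0).2} := by
  rw [ofPred_forall]
  exact isClosed_iInter fun t => isClosed_eq (continuous_snd.comp (continuous_eval_const t))
    (continuous_snd.comp (continuous_eval_const 0))

end Curves

section ParallelTransport

variable {E : Type*} [MetricSpace E] [CompleteSpace E] [TopologicalSpace.SeparableSpace E]
  [MeasurableSpace E] [BorelSpace E] {γ : Measure (E × E)} {η : Measure (Curves E)}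

theorem exists_isParallelTransport [Nonempty E] [IsProbabilityMeasure γ] [IsProbabilityMeasure η]
    (h : γ.map Prod.fst = η.map (ev 0)) : ∃ Ψ, IsParallelTransport γ η Ψ := by
  have hconst := continuous_curveWithConstSnd (E := E) (F := E)
  set κ := γ.condKernel.comap (ev 0) (continuous_ev 0).measurable
  refine ⟨(η ⊗ₘ κ).map curveWithConstSnd, Measure.isProbabilityMeasure_map hconst.aemeasurable,
    (ae_map_iff hconst.aemeasurable isClosed_setOf_snd_const.measurableSet).mpr
      (ae_of_all _ fun _ _ => rfl), ?_, ?_⟩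
  · rw [Measure.map_map continuous_p₁.measurable hconst.measurable, p₁_comp_curveWithConstSnd]
    exact Measure.fst_compProd η κ
  · rw [Measure.map_map (continuous_ev 0).measurable hconst.measurable,
      ev_comp_curveWithConstSnd, Measure.map_prodMap_compProd_comap, ← h]
    exact γ.disintegrate γ.condKernel

theorem IsParallelTransport.eq {A : Set (Curves E)} (hηA : ∀ᵐ θ ∂η, θ ∈ A)
    (hA : InjOn (ev 0) A) {Ψ₁ Ψ₂ : Measure (Curves (E × E))} (h₁ : IsParallelTransport γ η Ψ₁)
    (h₂ : IsParallelTransport γ η Ψ₂) : Ψ₁ = Ψ₂ := by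
  set S := {ψ : Curves (E × E) | (∀ t : unitInterval, (ψ t).2 = (ψ 0).2) ∧ p₁ ψ ∈ A}
  have hS : ∀ {Ψ}, IsParallelTransport γ η Ψ → ∀ᵐ ψ ∂Ψ, ψ ∈ S := fun hΨ => by
    filter_upwards [hΨ.2.1, ae_of_ae_map continuous_p₁.measurable.aemeasurable
      (hΨ.2.2.1 ▸ hηA)] with ψ hconst hA using ⟨hconst, hA⟩
  have hinj : InjOn (ev 0) S := by
    rintro ψ₁ ⟨hc₁, hA₁⟩ ψ₂ ⟨hc₂, hA₂⟩ h0
    have hp₁ : p₁ ψ₁ = p₁ ψ₂ := hA hA₁ hA₂ (congrArg Prod.fst h0)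
    ext t
    · exact congrArg (· t) hp₁
    · rw [hc₁ t, hc₂ t]
      exact congrArg Prod.snd h0
  exact Measure.ext_of_map_eq_of_injOn (continuous_ev 0) hinj (hS h₁) (hS h₂)
    (h₁.2.2.2.trans h₂.2.2.2.symm)

end ParallelTransport

theorem stmt4_general {d : ℕ} (μ : Measure (Rd d))
    (γ : Measure (Rd d × Rd d)) (hγ : IsTangent μ γ)
    (η : Measure (Curves (Rd d))) [IsProbabilityMeasure η] (hη : η.map (ev 0) = μ)
    (f : unitInterval → Rd d → Rd d)
    (hfmeas : Measurable (Function.uncurry f))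
    (hfbdd : ∃ M : ℝ, ∀ t x, ‖f t x‖ ≤ M)
    (hflip : ∃ L : ℝ≥0, ∀ t, LipschitzWith L (f t))
    (hconc : ∀ᵐ θ ∂η, ∀ t : unitInterval,
      θ t = θ 0 + ∫ s in (0:ℝ)..(t:ℝ), f (pr s) (θ (pr s))) :
    ∃! Ψ : Measure (Curves (Rd d × Rd d)), IsParallelTransport γ η Ψ := by
  obtain ⟨M, hM⟩ := hfbdd
  obtain ⟨L, hL⟩ := hflip
  obtain ⟨hγ_prob, hγ_fst, -⟩ := hγ
  obtain ⟨Ψ, hΨ⟩ := exists_isParallelTransport (hγ_fst.trans hη.symm)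
  refine ⟨Ψ, hΨ, fun Ψ' hΨ' => hΨ'.eq hconc ?_ hΨ⟩
  intro θ₁ h₁ θ₂ h₂ h0
  exact curve_eq_of_eq_add_integral hfmeas hM hL h₁ h₂ h0

theorem stmt4 {d : ℕ} (μ : Measure (Rd d)) [IsProbabilityMeasure μ] (hμ : FinSM μ)
    (γ : Measure (Rd d × Rd d)) (hγ : IsTangent μ γ)
    (η : Measure (Curves (Rd d))) [IsProbabilityMeasure η] (hη : η.map (ev 0) = μ)
    (f : unitInterval → Rd d → Rd d)
    (hfmeas : Measurable (Function.uncurry f))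
    (hfbdd : ∃ M : ℝ, ∀ t x, ‖f t x‖ ≤ M)
    (hflip : ∃ L : ℝ≥0, ∀ t, LipschitzWith L (f t))
    (hconc : ∀ᵐ θ ∂η, ∀ t : unitInterval,
      θ t = θ 0 + ∫ s in (0:ℝ)..(t:ℝ), f (pr s) (θ (pr s))) :
    ∃! Ψ : Measure (Curves (Rd d × Rd d)), IsParallelTransport γ η Ψ :=
  stmt4_general μ γ hγ η hη f hfmeas hfbdd hflip hconc

end
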